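/- Let d ≥ 1, let k = (k_1,…,k_d) be a multi-index, and let f : ℝ^d → ℝ possess a continuous mixed partial derivative ∂^{|k|}f/∂x_1^{k_1}⋯∂x_d^{k_d}. Then n^{|k|} · Δ^k f(x) converges to ∂^{|k|}f(x)/∂x_1^{k_1}⋯∂x_d^{k_d} as n → ∞, uniformly for x in the cube K^d = [0,1]^d, where Δ^k is the composition of the k_i-fold iterated forward differences with step 1/n in each coordinate. -/

import Mathlib

/-- Forward difference of `g : ℝ^d → ℝ` in the `i`-th coordinate with step `z`. -/
def coordFwdDiff {d : ℕ} (i : Fin d) (z : ℝ) (g : (Fin d → ℝ) → ℝ) :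
    (Fin d → ℝ) → ℝ :=
  fun x => g (Function.update x i (x i + z)) - g x

/-- The iterated finite difference `Δ^k = Δ_{(x_1)}^{k_1} ∘ ⋯ ∘ Δ_{(x_d)}^{k_d}` with
step `1/n` in each coordinate. -/
noncomputable def multiFwdDiffN {d : ℕ} (n : ℕ) (k : Fin d → ℕ) (g : (Fin d → ℝ) → ℝ) :
    (Fin d → ℝ) → ℝ :=
  (List.finRange d).foldr (fun i h => (coordFwdDiff i (1 / (n : ℝ)))^[k i] h) g

/-- `IsPartialAlong l f g` says that `g` is the iterated partial derivative of `f` taken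
successively in the coordinates listed in `l` (head of the list is the outermost
differentiation), each single differentiation existing everywhere. -/
def IsPartialAlong {d : ℕ} : List (Fin d) → ((Fin d → ℝ) → ℝ) → ((Fin d → ℝ) → ℝ) → Prop
  | [], f, g => g = f
  | i :: l, f, g => ∃ h : (Fin d → ℝ) → ℝ, IsPartialAlong l f h ∧
      ∀ x, HasDerivAt (fun t => h (Function.update x i t)) (g x) (x i)

/-- The list of coordinates `1^{k_1}, 2^{k_2}, …, d^{k_d}` encoding the multi-index `k`. -/
def multiIndexList {d : ℕ} (k : Fin d → ℕ) : List (Fin d) :=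
  (List.finRange d).flatMap fun i => List.replicate (k i) i

/-!
Forward differences in different coordinates commute, and a forward difference of `f` has as
partial derivatives the forward differences of the partial derivatives of `f`. Peeling off one
difference at a time with the mean value theorem therefore gives
`n ^ |k| Δ^k f (x) = ∂^k f (w)` for some `w` within distance `|k| / n` of `x`, and the uniform
continuity of `∂^k f` near the compact cube finishes the proof.
-/

open Filter Topology Function

section Topology

variable {ι α β : Type*}

theorem dist_update_self [Fintype ι] [DecidableEq ι] [PseudoMetricSpace α] (x : ι → α) (i : ι)
    (a : α) : dist (update x i a) x = dist a (x i) := by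
  refine le_antisymm ((dist_pi_le_iff dist_nonneg).2 fun j => ?_) ?_
  · rcases eq_or_ne j i with rfl | hj <;> simp [*]
  · simpa using dist_le_pi_dist (update x i a) x i

/-- The points `w` need not lie in `s`: Heine–Cantor holds at a compact set. -/
theorem tendstoUniformlyOn_of_forall_exists_dist_le [PseudoMetricSpace α] [PseudoMetricSpace β]
    {l : Filter ι} {F : ι → α → β} {g : α → β} {s : Set α} {r : ι → ℝ}
    (hs : IsCompact s) (hg : ∀ x ∈ s, ContinuousAt g x) (hr : Tendsto r l (𝓝 0))
    (hF : ∀ᶠ n in l, ∀ x ∈ s, ∃ w, dist w x ≤ r n ∧ F n x = g w) :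
    TendstoUniformlyOn F g l s := by
  rw [Metric.tendstoUniformlyOn_iff]
  intro ε hε
  obtain ⟨δ, hδ, hgδ⟩ := Metric.mem_uniformity_dist.1
    (hs.uniformContinuousAt_of_continuousAt g hg (Metric.dist_mem_uniformity hε))
  filter_upwards [hF, hr.eventually (gt_mem_nhds hδ)] with n hFn hrn x hx
  obtain ⟨w, hwx, hw⟩ := hFn x hx
  rw [hw]
  exact hgδ (by rw [dist_comm]; linarith) hx

end Topology

section FiniteDifferences

variable {d : ℕ}

noncomputable def listFwdDiff (z : ℝ) (l : List (Fin d)) (g : (Fin d → ℝ) → ℝ) :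
    (Fin d → ℝ) → ℝ :=
  l.foldr (fun i h => coordFwdDiff i z h) g

theorem coordFwdDiff_comm (i j : Fin d) (z : ℝ) (f : (Fin d → ℝ) → ℝ) :
    coordFwdDiff i z (coordFwdDiff j z f) = coordFwdDiff j z (coordFwdDiff i z f) := by
  rcases eq_or_ne i j with rfl | hij
  · rfl
  funext x
  simp only [coordFwdDiff]
  rw [update_of_ne hij, update_of_ne hij.symm, update_comm hij]
  ring

theorem listFwdDiff_cons (z : ℝ) (i : Fin d) (l : List (Fin d)) (f : (Fin d → ℝ) → ℝ) :
    listFwdDiff z (i :: l) f = coordFwdDiff i z (listFwdDiff z l f) :=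
  rfl

theorem coordFwdDiff_listFwdDiff (i : Fin d) (z : ℝ) (l : List (Fin d))
    (f : (Fin d → ℝ) → ℝ) :
    coordFwdDiff i z (listFwdDiff z l f) = listFwdDiff z l (coordFwdDiff i z f) := by
  induction l with
  | nil => rfl
  | cons j l ih =>
    rw [listFwdDiff_cons, listFwdDiff_cons, coordFwdDiff_comm, ih]

theorem listFwdDiff_replicate (z : ℝ) (i : Fin d) (m : ℕ) (g : (Fin d → ℝ) → ℝ) :
    listFwdDiff z (List.replicate m i) g = (coordFwdDiff i z)^[m] g := by
  induction m with
  | zero => rfl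
  | succ m ih =>
    rw [iterate_succ_apply', ← ih]
    rfl

theorem multiFwdDiffN_eq_listFwdDiff (n : ℕ) (k : Fin d → ℕ) (f : (Fin d → ℝ) → ℝ) :
    multiFwdDiffN n k f = listFwdDiff (1 / (n : ℝ)) (multiIndexList k) f := by
  unfold multiFwdDiffN multiIndexList
  induction List.finRange d with
  | nil => rfl
  | cons a L ih =>
    rw [List.flatMap_cons, listFwdDiff, List.foldr_append, List.foldr_cons, ih,
      ← listFwdDiff_replicate]
    rfl

theorem length_multiIndexList (k : Fin d → ℕ) : (multiIndexList k).length = ∑ i, k i := by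
  simp [multiIndexList, List.length_flatMap, Fin.sum_univ_def]

theorem IsPartialAlong.comp_add_const (v : Fin d → ℝ) :
    ∀ {l : List (Fin d)} {f h : (Fin d → ℝ) → ℝ}, IsPartialAlong l f h →
      IsPartialAlong l (fun x => f (x + v)) (fun x => h (x + v))
  | [], _, _, hfh => by rw [IsPartialAlong] at hfh ⊢; rw [hfh]
  | i :: _, _, _, ⟨p, hp, hder⟩ => by
    refine ⟨fun x => p (x + v), hp.comp_add_const v, fun x => ?_⟩
    have hshift : ∀ t, update x i t + v = update (x + v) i (t + v i) := fun t => by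
      ext j; rcases eq_or_ne j i with rfl | hj <;> simp [*]
    simp only [hshift]
    exact (hder (x + v)).comp_add_const (x i) (v i)

theorem IsPartialAlong.sub :
    ∀ {l : List (Fin d)} {f₁ h₁ f₂ h₂ : (Fin d → ℝ) → ℝ},
      IsPartialAlong l f₁ h₁ → IsPartialAlong l f₂ h₂ →
      IsPartialAlong l (fun x => f₁ x - f₂ x) (fun x => h₁ x - h₂ x)
  | [], _, _, _, _, hfh₁, hfh₂ => by rw [IsPartialAlong] at hfh₁ hfh₂ ⊢; rw [hfh₁, hfh₂]
  | _ :: _, _, _, _, _, ⟨p₁, hp₁, hder₁⟩, ⟨p₂, hp₂, hder₂⟩ =>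
    ⟨fun x => p₁ x - p₂ x, hp₁.sub hp₂, fun x => (hder₁ x).sub (hder₂ x)⟩

theorem coordFwdDiff_eq_sub_comp_add_single (i : Fin d) (z : ℝ) (f : (Fin d → ℝ) → ℝ) :
    coordFwdDiff i z f = fun x => f (x + Pi.single i z) - f x := by
  funext x
  have hshift : update x i (x i + z) = x + Pi.single i z := by
    ext j; rcases eq_or_ne j i with rfl | hj <;> simp [*]
  simp only [coordFwdDiff, hshift]

theorem IsPartialAlong.coordFwdDiff {l : List (Fin d)} {f h : (Fin d → ℝ) → ℝ}
    (hfh : IsPartialAlong l f h) (i : Fin d) (z : ℝ) :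
    IsPartialAlong l (coordFwdDiff i z f) (coordFwdDiff i z h) := by
  rw [coordFwdDiff_eq_sub_comp_add_single, coordFwdDiff_eq_sub_comp_add_single]
  exact (hfh.comp_add_const _).sub hfh

theorem exists_coordFwdDiff_eq_mul {h g : (Fin d → ℝ) → ℝ} {i : Fin d}
    (hder : ∀ x, HasDerivAt (fun t => h (update x i t)) (g x) (x i)) {z : ℝ} (hz : 0 < z)
    (x : Fin d → ℝ) :
    ∃ ξ ∈ Set.Ioo (x i) (x i + z), coordFwdDiff i z h x = z * g (update x i ξ) := by
  have hline : ∀ t, HasDerivAt (fun s => h (update x i s)) (g (update x i t)) t := fun t => by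
    simpa using hder (update x i t)
  obtain ⟨ξ, hξ, hslope⟩ := exists_hasDerivAt_eq_slope _ _ (by linarith : x i < x i + z)
    (continuous_iff_continuousAt.2 fun t => (hline t).continuousAt).continuousOn
    (fun t _ => hline t)
  refine ⟨ξ, hξ, ?_⟩
  rw [hslope, update_eq_self, add_sub_cancel_left, coordFwdDiff]
  field_simp

theorem IsPartialAlong.exists_listFwdDiff_eq {z : ℝ} (hz : 0 < z) :
    ∀ {l : List (Fin d)} {f g : (Fin d → ℝ) → ℝ}, IsPartialAlong l f g → ∀ x,
      ∃ w, dist w x ≤ l.length * z ∧ listFwdDiff z l f x = z ^ l.length * g w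
  | [], _, _, hfg, x => by
    rw [IsPartialAlong] at hfg
    exact ⟨x, by simp, by simp [hfg, listFwdDiff]⟩
  | i :: l, f, g, ⟨h, hfh, hder⟩, x => by
    obtain ⟨w, hwx, hw⟩ := (hfh.coordFwdDiff i z).exists_listFwdDiff_eq hz x
    obtain ⟨ξ, hξ, hξw⟩ := exists_coordFwdDiff_eq_mul hder hz w
    refine ⟨update w i ξ, ?_, ?_⟩
    · have hξi : dist ξ (w i) ≤ z := by
        rw [Real.dist_eq, abs_le]; constructor <;> linarith [hξ.1, hξ.2]
      calc dist (update w i ξ) x ≤ dist (update w i ξ) w + dist w x := dist_triangle _ _ _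
        _ ≤ z + l.length * z := by rw [dist_update_self]; gcongr
        _ = (i :: l).length * z := by push_cast [List.length_cons]; ring
    · rw [listFwdDiff_cons, coordFwdDiff_listFwdDiff, hw, hξw, List.length_cons, pow_succ]
      ring

end FiniteDifferences

theorem multiFwdDiffN_tendstoUniformlyOn_cube_general (d : ℕ) (k : Fin d → ℕ)
    (f g : (Fin d → ℝ) → ℝ) (hg : IsPartialAlong (multiIndexList k) f g)
    (hgc : Continuous g) :
    TendstoUniformlyOn
      (fun (n : ℕ) x => (n : ℝ) ^ (∑ i, k i) * multiFwdDiffN n k f x) g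
      Filter.atTop (Set.Icc (0 : Fin d → ℝ) 1) := by
  refine tendstoUniformlyOn_of_forall_exists_dist_le isCompact_Icc
    (fun x _ => hgc.continuousAt) (tendsto_const_div_atTop_nhds_zero_nat ((∑ i, k i : ℕ) : ℝ)) ?_
  filter_upwards [eventually_ge_atTop 1] with n hn x _
  have hz : (0 : ℝ) < 1 / n := by positivity
  obtain ⟨w, hwx, hw⟩ := hg.exists_listFwdDiff_eq hz x
  rw [length_multiIndexList] at hwx hw
  refine ⟨w, by rwa [mul_one_div] at hwx, ?_⟩
  rw [multiFwdDiffN_eq_listFwdDiff, hw, ← mul_assoc, ← mul_pow, mul_one_div_cancel (by positivity),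
    one_pow, one_mul]

/-- If `d ≥ 1`, `k` is a multi-index and `f : ℝ^d → ℝ` possesses a continuous mixed
partial derivative `g = ∂^{|k|}f/∂x_1^{k_1}⋯∂x_d^{k_d}`, then
`n^{|k|} Δ^k f(x) → g(x)` as `n → ∞`, uniformly on the cube `K^d = [0,1]^d`. -/
theorem multiFwdDiffN_tendstoUniformlyOn_cube (d : ℕ) (hd : 1 ≤ d) (k : Fin d → ℕ)
    (f g : (Fin d → ℝ) → ℝ) (hg : IsPartialAlong (multiIndexList k) f g)
    (hgc : Continuous g) :
    TendstoUniformlyOn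
      (fun (n : ℕ) x => (n : ℝ) ^ (∑ i, k i) * multiFwdDiffN n k f x) g
      Filter.atTop (Set.Icc (0 : Fin d → ℝ) 1) :=
  multiFwdDiffN_tendstoUniformlyOn_cube_general d k f g hg hgc
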